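/- Let n, k ≥ 1 and suppose T : ℂ → Matrix (Fin n) (Fin n) ℂ has Keldysh form on the disk D(c, r) with data (U, H, λ, v, w). Then (1/(2πi)) · ∮_{|ξ−c|=r} ξ • T(ξ)⁻¹ dξ = Σ_{i=1}^{k} λ_i • (v_i w_iᴴ). That is, the first contour moment of T⁻¹ over the circle of radius r about c equals the λ_i-weighted sum of the outer products v_i w_iᴴ associated with the eigenvalues λ_i enclosed by the circle. -/

import Mathlib

open Complex MeasureTheory Matrix

attribute [local instance] Matrix.normedAddCommGroup Matrix.normedSpace


private theorem circleIntegral_add' {E : Type*} [NormedAddCommGroup E] [NormedSpace ℂ E]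
    {f g : ℂ → E} {c : ℂ} {R : ℝ} (hf : CircleIntegrable f c R)
    (hg : CircleIntegrable g c R) :
    (∮ z in C(c, R), (f z + g z)) = (∮ z in C(c, R), f z) + ∮ z in C(c, R), g z := by
  simp only [circleIntegral, smul_add]
  exact intervalIntegral.integral_add hf.out hg.out

private theorem circleIntegral_finset_sum' {E : Type*} [NormedAddCommGroup E] [NormedSpace ℂ E]
    {ι : Type*} (s : Finset ι) {f : ι → ℂ → E} {c : ℂ} {R : ℝ}
    (hf : ∀ i ∈ s, CircleIntegrable (f i) c R) :
    (∮ z in C(c, R), (∑ i ∈ s, f i z)) = ∑ i ∈ s, ∮ z in C(c, R), f i z := by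
  simp only [circleIntegral, Finset.smul_sum]
  exact intervalIntegral.integral_finset_sum fun i hi => (hf i hi).out

/-- If `T` has Keldysh form on the disk `D(c, r)` with data `(U, H, lam, v, w)`, then the first
contour moment of `T⁻¹` over the circle `|ξ - c| = r` equals `∑ i, lam i • (v i (w i)ᴴ)`. -/
theorem circleIntegral_smul_inv_eq_sum_smul_vecMulVec
    (n k : ℕ) (hn : 1 ≤ n) (hk : 1 ≤ k)
    (T H : ℂ → Matrix (Fin n) (Fin n) ℂ) (c : ℂ) (r : ℝ) (hr : 0 < r)
    (U : Set ℂ) (hU : IsOpen U) (hUc : Metric.closedBall c r ⊆ U)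
    (hH : DifferentiableOn ℂ H U)
    (lam : Fin k → ℂ) (hlam_inj : Function.Injective lam)
    (hlam_mem : ∀ i, lam i ∈ Metric.ball c r)
    (v w : Fin k → Fin n → ℂ)
    (hT : ∀ ξ ∈ U, ξ ∉ Set.range lam →
      IsUnit (T ξ) ∧
      (T ξ)⁻¹ = H ξ +
        ∑ i, (ξ - lam i)⁻¹ • Matrix.vecMulVec (v i) (fun q => (starRingEnd ℂ) (w i q))) :
    (2 * (Real.pi : ℂ) * Complex.I)⁻¹ • (∮ ξ in C(c, r), ξ • (T ξ)⁻¹) =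
      ∑ i, lam i • Matrix.vecMulVec (v i) (fun q => (starRingEnd ℂ) (w i q)) := by
  classical
  set M : Fin k → Matrix (Fin n) (Fin n) ℂ :=
    fun i => Matrix.vecMulVec (v i) (fun q => (starRingEnd ℂ) (w i q)) with hM
  have hsub : Metric.sphere c r ⊆ U := fun ξ hξ => hUc (Metric.sphere_subset_closedBall hξ)
  have hnotin : ∀ ξ ∈ Metric.sphere c r, ξ ∉ Set.range lam := by
    rintro ξ hξ ⟨i, rfl⟩
    rw [Metric.mem_sphere] at hξ
    exact absurd hξ (ne_of_lt (Metric.mem_ball.mp (hlam_mem i)))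
  have hne : ∀ ξ ∈ Metric.sphere c r, ∀ i : Fin k, ξ ≠ lam i := by
    intro ξ hξ i h
    exact hnotin ξ hξ ⟨i, h.symm⟩
  -- integrand equality on the sphere
  have hint : (∮ ξ in C(c, r), ξ • (T ξ)⁻¹)
      = ∮ ξ in C(c, r), (ξ • H ξ + ∑ i, (ξ - lam i)⁻¹ • (ξ • M i)) := by
    refine circleIntegral.integral_congr hr.le fun ξ hξ => ?_
    rw [(hT ξ (hsub hξ) (hnotin ξ hξ)).2, smul_add, Finset.smul_sum]
    congr 1
    exact Finset.sum_congr rfl fun i _ => (smul_comm _ _ _)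
  -- integrability
  have hHc : ContinuousOn (fun ξ => ξ • H ξ) (Metric.closedBall c r) :=
    (continuousOn_id.smul (hH.continuousOn.mono hUc))
  have hint1 : CircleIntegrable (fun ξ => ξ • H ξ) c r :=
    (hHc.mono Metric.sphere_subset_closedBall).circleIntegrable hr.le
  have hint2 : ∀ i : Fin k, CircleIntegrable (fun ξ => (ξ - lam i)⁻¹ • (ξ • M i)) c r := by
    intro i
    refine ContinuousOn.circleIntegrable hr.le ?_
    refine ContinuousOn.smul (f := fun ξ => (ξ - lam i)⁻¹) (g := fun ξ : ℂ => ξ • M i) ?_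
      (continuousOn_id.smul continuousOn_const)
    refine ContinuousOn.inv₀ (by fun_prop) fun ξ hξ => sub_ne_zero.mpr (hne ξ hξ i)
  have hzero : (∮ ξ in C(c, r), ξ • H ξ) = 0 := by
    refine circleIntegral_eq_zero_of_differentiable_on_off_countable hr.le
      Set.countable_empty hHc fun z hz => ?_
    have hzU : DifferentiableAt ℂ H z :=
      hH.differentiableAt (hU.mem_nhds (hUc (Metric.ball_subset_closedBall hz.1)))
    exact differentiableAt_id.smul hzU
  have hterm : ∀ i : Fin k, (∮ ξ in C(c, r), (ξ - lam i)⁻¹ • (ξ • M i))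
      = (2 * (Real.pi : ℂ) * Complex.I) • (lam i • M i) := by
    intro i
    have hd : DifferentiableOn ℂ (fun ξ => ξ • M i) (Metric.closedBall c r) :=
      (differentiable_id.smul_const (M i)).differentiableOn
    exact hd.circleIntegral_sub_inv_smul (hlam_mem i)
  have hsint : CircleIntegrable (fun ξ => ∑ i : Fin k, (ξ - lam i)⁻¹ • (ξ • M i)) c r := by
    refine ContinuousOn.circleIntegrable hr.le ?_
    refine continuousOn_finset_sum _ fun i _ => ?_
    refine ContinuousOn.smul (f := fun ξ => (ξ - lam i)⁻¹) (g := fun ξ : ℂ => ξ • M i) ?_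
      (continuousOn_id.smul continuousOn_const)
    exact ContinuousOn.inv₀ (by fun_prop) fun ξ hξ => sub_ne_zero.mpr (hne ξ hξ i)
  rw [hint, circleIntegral_add' hint1 hsint, hzero,
    circleIntegral_finset_sum' _ (fun i _ => hint2 i), zero_add]
  rw [Finset.smul_sum]
  refine Finset.sum_congr rfl fun i _ => ?_
  rw [hterm i, smul_smul, inv_mul_cancel₀ Complex.two_pi_I_ne_zero, one_smul]
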